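/- Let A and B be n×n complex matrices with A real symmetric, invertible, and neither positive nor negative semidefinite (i.e., non-positive, non-negative, non-degenerate), and B symmetric complex-valued. If for every ξ ∈ ℝⁿ, ⟨Aξ,ξ⟩ = 0 implies ⟨Bξ,ξ⟩ = 0, then there exists λ ∈ ℂ such that B = λA. -/

import Mathlib

/-!
Normalise the indefinite form `a` to a hyperbolic pair `e, f` (`a e e = 1`, `a f f = -1`,
`a e f = 0`) and subtract `a • b e e` from `b`, so that the difference `c` vanishes on `e, f`.
For any `x`, the vector `x + s • e + t • f` is `a`-isotropic exactly on a hyperbola in the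
`(s, t)`-plane, along which `c` of it is an affine function of `(s, t)`; an affine function
vanishing on a hyperbola is zero, so `c x x = 0`, and `c = 0` by polarization.
-/

variable {V W : Type*} [AddCommGroup V] [Module ℝ V] [AddCommGroup W] [Module ℝ W]

theorem eq_zero_of_forall_sq_sub_sq_eq
    {K : ℝ} {w u v : W} (h : ∀ σ τ : ℝ, σ ^ 2 - τ ^ 2 = K → w + σ • u + τ • v = 0) :
    w = 0 ∧ u = 0 ∧ v = 0 := by
  have hline : ∀ σ : ℝ, K < σ ^ 2 → v = 0 ∧ w + σ • u = 0 := by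
    intro σ hσ
    set τ := √(σ ^ 2 - K)
    have hτ : 0 < τ := Real.sqrt_pos.2 (by linarith)
    have hτsq : τ ^ 2 = σ ^ 2 - K := Real.sq_sqrt (by linarith)
    have hup := h σ τ (by linarith)
    have hdown := h σ (-τ) (by linarith)
    have hv : (2 * τ) • v = 0 := by
      linear_combination (norm := module) hup - hdown
    have hv0 : v = 0 := (smul_eq_zero.1 hv).resolve_left (by positivity)
    exact ⟨hv0, by simpa [hv0] using hup⟩
  have hK : K < (|K| + 1) ^ 2 := by nlinarith [le_abs_self K, abs_nonneg K]
  have hK' : K < (|K| + 2) ^ 2 := by nlinarith [le_abs_self K, abs_nonneg K]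
  obtain ⟨hv, h1⟩ := hline _ hK
  obtain ⟨-, h2⟩ := hline _ hK'
  have hu : u = 0 := by linear_combination (norm := module) h2 - h1
  exact ⟨by simpa [hu] using h1, hu, hv⟩

namespace LinearMap.BilinMap

variable {c : LinearMap.BilinMap ℝ V W}

theorem apply_add_self (hc : ∀ x y, c x y = c y x) (x y : V) :
    c (x + y) (x + y) = c x x + c y y + (2 : ℝ) • c x y := by
  simp only [map_add, LinearMap.add_apply, hc y x]
  module

theorem apply_add_smul_add_smul_self (hc : ∀ x y, c x y = c y x) (x e f : V) (s t : ℝ) :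
    c (x + s • e + t • f) (x + s • e + t • f) =
      c x x + (s ^ 2) • c e e + (t ^ 2) • c f f + (2 * s) • c x e + (2 * t) • c x f
        + (2 * s * t) • c e f := by
  simp only [map_add, map_smul, LinearMap.add_apply, LinearMap.smul_apply, hc e x, hc f x, hc f e]
  module

end LinearMap.BilinMap

open LinearMap.BilinMap

theorem exists_smul_apply_self_eq_one {a : LinearMap.BilinForm ℝ V} {x : V} (hx : 0 < a x x) :
    ∃ r : ℝ, a (r • x) (r • x) = 1 := by
  refine ⟨(√(a x x))⁻¹, ?_⟩
  have hs : √(a x x) ^ 2 = a x x := Real.sq_sqrt hx.le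
  have hs0 : √(a x x) ≠ 0 := by positivity
  simp only [map_smul, LinearMap.smul_apply, smul_eq_mul]
  field_simp
  linarith

theorem exists_hyperbolic_pair {a : LinearMap.BilinForm ℝ V} (ha : a.IsSymm)
    (hpos : ∃ x, 0 < a x x) (hneg : ∃ x, a x x < 0) :
    ∃ e f : V, a e e = 1 ∧ a f f = -1 ∧ a e f = 0 := by
  obtain ⟨p, hp⟩ := hpos
  obtain ⟨q, hq⟩ := hneg
  obtain ⟨r, he⟩ := exists_smul_apply_self_eq_one hp
  set e := r • p
  set g := q - a e q • e
  have heg : a e g = 0 := by simp [g, he]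
  have hg : 0 < (-a) g g := by
    have hgg : a g g = a q q - a e q ^ 2 := by
      simp only [g, map_sub, map_smul, LinearMap.sub_apply, LinearMap.smul_apply, smul_eq_mul,
        he, ha.eq q e]
      ring
    simp only [LinearMap.neg_apply, hgg]
    nlinarith [sq_nonneg (a e q)]
  obtain ⟨s, hf⟩ := exists_smul_apply_self_eq_one hg
  refine ⟨e, s • g, he, by simpa [neg_eq_iff_eq_neg] using hf, by simp [heg]⟩

theorem eq_zero_of_vanishes_on_isotropic {a : LinearMap.BilinForm ℝ V} (ha : a.IsSymm)
    {c : LinearMap.BilinMap ℝ V W} (hc : ∀ x y, c x y = c y x)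
    (h : ∀ x, a x x = 0 → c x x = 0) {e f : V} (hee : a e e = 1) (hff : a f f = -1)
    (hef : a e f = 0) (hce : c e e = 0) : c = 0 := by
  obtain ⟨hcf, hcef⟩ : c f f = 0 ∧ c e f = 0 := by
    have hsum := h (e + f) (by rw [apply_add_self ha.eq]; simp [hee, hff, hef])
    have hdiff := h (e + (-1 : ℝ) • f) (by rw [apply_add_self ha.eq]; simp [hee, hff, hef])
    simp only [apply_add_self hc, map_smul, LinearMap.smul_apply, hce] at hsum hdiff
    constructor
    · linear_combination (norm := module) (1/2 : ℝ) • (hsum + hdiff)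
    · linear_combination (norm := module) (1/4 : ℝ) • (hsum - hdiff)
  have hdiag : ∀ x, c x x = 0 := by
    intro x
    set α := a x e
    set β := a x f
    obtain ⟨hw, hu, hv⟩ := eq_zero_of_forall_sq_sub_sq_eq (K := α ^ 2 - β ^ 2 - a x x)
      (w := c x x - (2 * α) • c x e + (2 * β) • c x f) (u := (2 : ℝ) • c x e)
      (v := (2 : ℝ) • c x f)
      fun σ τ hστ => by
        have hnull := h (x + (σ - α) • e + (τ + β) • f) (by
          rw [apply_add_smul_add_smul_self ha.eq, hee, hff, hef]
          simp only [smul_eq_mul]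
          linear_combination hστ)
        rw [apply_add_smul_add_smul_self hc, hce, hcf, hcef] at hnull
        linear_combination (norm := module) hnull
    linear_combination (norm := module) hw + α • hu - β • hv
  ext x y
  have hpol := apply_add_self hc x y
  rw [hdiag, hdiag, hdiag, zero_add, zero_add, eq_comm, smul_eq_zero] at hpol
  exact hpol.resolve_left two_ne_zero

theorem exists_eq_smul_of_vanishes_on_isotropic {a : LinearMap.BilinForm ℝ V} (ha : a.IsSymm)
    (hpos : ∃ x, 0 < a x x) (hneg : ∃ x, a x x < 0) {b : LinearMap.BilinMap ℝ V W}
    (hb : ∀ x y, b x y = b y x) (h : ∀ x, a x x = 0 → b x x = 0) :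
    ∃ w : W, ∀ x y, b x y = a x y • w := by
  obtain ⟨e, f, hee, hff, hef⟩ := exists_hyperbolic_pair ha hpos hneg
  refine ⟨b e e, fun x y => sub_eq_zero.1 ?_⟩
  have hzero := eq_zero_of_vanishes_on_isotropic ha
    (c := b - a.compr₂ (LinearMap.toSpanSingleton ℝ W (b e e)))
    (fun x y => by simp [hb x y, ha.eq x y]) (fun x hx => by simp [hx, h x hx])
    hee hff hef (by simp [hee])
  simpa using LinearMap.congr_fun₂ hzero x y

open Matrix

theorem stmt_0_general (n : ℕ) (A : Matrix (Fin n) (Fin n) ℝ) (B : Matrix (Fin n) (Fin n) ℂ)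
    (hAsymm : A.IsSymm)
    (hpos : ∃ ξ : Fin n → ℝ, 0 < ξ ⬝ᵥ A.mulVec ξ)
    (hneg : ∃ ξ : Fin n → ℝ, ξ ⬝ᵥ A.mulVec ξ < 0)
    (hBsymm : B.IsSymm)
    (h : ∀ ξ : Fin n → ℝ, ξ ⬝ᵥ A.mulVec ξ = 0 →
      (fun i => (ξ i : ℂ)) ⬝ᵥ B.mulVec (fun i => (ξ i : ℂ)) = 0) :
    ∃ lam : ℂ, B = lam • A.map (fun r => (r : ℂ)) := by
  let φ : (Fin n → ℝ) →ₗ[ℝ] Fin n → ℂ := (Complex.ofRealAm.compLeft (Fin n)).toLinearMap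
  let b := (B.toBilin'.restrictScalars₁₂ ℝ ℝ).compl₁₂ φ φ
  have hb : ∀ x y, b x y = (fun i => (x i : ℂ)) ⬝ᵥ B *ᵥ (fun i => (y i : ℂ)) :=
    fun x y => toBilin'_apply' B _ _
  have hφ : ∀ i, φ (Pi.single i 1) = Pi.single i 1 := fun i => by
    ext k; by_cases hk : k = i <;> simp [φ, hk]
  obtain ⟨lam, hlam⟩ := exists_eq_smul_of_vanishes_on_isotropic (b := b)
    (isSymm_toBilin'_iff_isSymm.2 hAsymm) (by simpa [toBilin'_apply'] using hpos)
    (by simpa [toBilin'_apply'] using hneg)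
    (fun x y => (isSymm_toBilin'_iff_isSymm.2 hBsymm).eq _ _)
    (fun x hx => by simpa [hb] using h x (by simpa [toBilin'_apply'] using hx))
  refine ⟨lam, Matrix.ext fun i j => ?_⟩
  simpa [b, hφ, toBilin'_single, mul_comm] using hlam (Pi.single i 1) (Pi.single j 1)

theorem stmt_0 (n : ℕ) (A : Matrix (Fin n) (Fin n) ℝ) (B : Matrix (Fin n) (Fin n) ℂ)
    (hAsymm : A.IsSymm) (hAinv : IsUnit A)
    (hpos : ∃ ξ : Fin n → ℝ, 0 < ξ ⬝ᵥ A.mulVec ξ)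
    (hneg : ∃ ξ : Fin n → ℝ, ξ ⬝ᵥ A.mulVec ξ < 0)
    (hBsymm : B.IsSymm)
    (h : ∀ ξ : Fin n → ℝ, ξ ⬝ᵥ A.mulVec ξ = 0 →
      (fun i => (ξ i : ℂ)) ⬝ᵥ B.mulVec (fun i => (ξ i : ℂ)) = 0) :
    ∃ lam : ℂ, B = lam • A.map (fun r => (r : ℂ)) :=
  stmt_0_general n A B hAsymm hpos hneg hBsymm h
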